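/- Let k be a commutative ring, A a unital k-algebra, and (C_r)_{r≥0} a unital formal associative deformation of A. Then a sequence a : ℕ → A is invertible for the deformed product ⋆ (i.e. there exists b : ℕ → A with a ⋆ b = 1 = b ⋆ a, where 1 is the sequence (1, 0, 0, …)) if and only if its classical limit a(0) is invertible in A. -/

import Mathlib

/-!
Since `C₀` is the product of `A`, the `n`-th coefficient of `a ⋆ b` is `a(0) b(n)` plus terms
involving only `b(m)` with `m < n`. So when `a(0)` is a unit, `a ⋆ b = 1` can be solved for `b(n)`
recursively, and the resulting right inverse `b` has the unit `a(0)⁻¹` as constant term. A right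
inverse `c` of `b` then equals `a`, because `⋆` is associative with unit `1`, so `b` is a two-sided
inverse. Conversely, the constant term of `a ⋆ b` is `a(0) b(0)`.
-/

open Finset

variable {k : Type*} [CommRing k] {A : Type*} [Ring A] [Algebra k A]

/-- The deformed (star) product of two formal series `a, b : ℕ → A`, with respect to a
formal deformation `(C_r)`:  `(a ⋆ b)(n) = ∑_{i+j+l=n} C_i(a(j), b(l))`. -/
def starMul (C : ℕ → A →ₗ[k] A →ₗ[k] A) (a b : ℕ → A) : ℕ → A :=
  fun n => ∑ p ∈ antidiagonal n, ∑ q ∈ antidiagonal p.2, C p.1 (a q.1) (b q.2)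

/-- The unit `1 = (1, 0, 0, …)` of the deformed algebra. -/
def starOne : ℕ → A := fun n => if n = 0 then 1 else 0

section
variable {M : Type*} [AddCommMonoid M]

lemma sum_antidiagonal_ite_fst_eq_zero (n : ℕ) (f : ℕ × ℕ → M) :
    ∑ p ∈ antidiagonal n, (if p.1 = 0 then f p else 0) = f (0, n) := by
  rw [sum_eq_single_of_mem (0, n) (by simp) fun p hp hne => if_neg ?_, if_pos rfl]
  rintro h0
  exact hne (Prod.ext h0 (by simpa [h0] using hp))

lemma sum_antidiagonal_ite_snd_eq_zero (n : ℕ) (f : ℕ × ℕ → M) :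
    ∑ p ∈ antidiagonal n, (if p.2 = 0 then f p else 0) = f (n, 0) := by
  rw [sum_eq_single_of_mem (n, 0) (by simp) fun p hp hne => if_neg ?_, if_pos rfl]
  rintro h0
  exact hne (Prod.ext (by simpa [h0] using hp) h0)

lemma snd_lt_of_mem_antidiagonal {n : ℕ} {p : ℕ × ℕ} (hp : p ∈ antidiagonal n) (hne : p ≠ (0, n)) :
    p.2 < n := by
  obtain ⟨i, j⟩ := p
  rw [HasAntidiagonal.mem_antidiagonal] at hp
  rw [Ne, Prod.mk.injEq] at hne
  dsimp only at hp ⊢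
  omega

-- Both sides sum `g i j x y z` over all `i + j + x + y + z = n`.
lemma sum_antidiagonal_regroup_left (n : ℕ) (g : ℕ → ℕ → ℕ → ℕ → ℕ → M) :
    ∑ P ∈ antidiagonal n, ∑ Q ∈ antidiagonal P.2, ∑ R ∈ antidiagonal Q.1,
      ∑ S ∈ antidiagonal R.2, g P.1 R.1 S.1 S.2 Q.2 =
    ∑ U ∈ antidiagonal n, ∑ V ∈ antidiagonal U.2, ∑ W ∈ antidiagonal V.2,
      ∑ p ∈ antidiagonal U.1, g p.1 p.2 V.1 W.1 W.2 := by
  rw [sum_sigma', sum_sigma', sum_sigma', sum_sigma', sum_sigma', sum_sigma']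
  refine sum_nbij' (fun t => ⟨⟨⟨(t.1.1.1.1 + t.1.2.1, t.2.1 + t.2.2 + t.1.1.2.2),
        (t.2.1, t.2.2 + t.1.1.2.2)⟩, (t.2.2, t.1.1.2.2)⟩, (t.1.1.1.1, t.1.2.1)⟩)
    (fun t => ⟨⟨⟨(t.2.1, t.2.2 + t.1.1.2.1 + t.1.2.1 + t.1.2.2),
        (t.2.2 + t.1.1.2.1 + t.1.2.1, t.1.2.2)⟩, (t.2.2, t.1.1.2.1 + t.1.2.1)⟩,
        (t.1.1.2.1, t.1.2.1)⟩) ?_ ?_ ?_ ?_ ?_ <;>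
  · rintro ⟨⟨⟨⟨x1, x2⟩, ⟨y1, y2⟩⟩, ⟨z1, z2⟩⟩, ⟨w1, w2⟩⟩ h
    simp only [mem_sigma, HasAntidiagonal.mem_antidiagonal, Sigma.mk.inj_iff, Prod.mk.injEq,
      heq_eq_eq, and_true, true_and] at h ⊢
    try omega

lemma sum_antidiagonal_regroup_right (n : ℕ) (g : ℕ → ℕ → ℕ → ℕ → ℕ → M) :
    ∑ P ∈ antidiagonal n, ∑ Q ∈ antidiagonal P.2, ∑ R ∈ antidiagonal Q.2,
      ∑ S ∈ antidiagonal R.2, g P.1 R.1 Q.1 S.1 S.2 =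
    ∑ U ∈ antidiagonal n, ∑ V ∈ antidiagonal U.2, ∑ W ∈ antidiagonal V.2,
      ∑ p ∈ antidiagonal U.1, g p.1 p.2 V.1 W.1 W.2 := by
  rw [sum_sigma', sum_sigma', sum_sigma', sum_sigma', sum_sigma', sum_sigma']
  refine sum_nbij' (fun t => ⟨⟨⟨(t.1.1.1.1 + t.1.2.1, t.1.1.2.1 + t.2.1 + t.2.2),
        (t.1.1.2.1, t.2.1 + t.2.2)⟩, (t.2.1, t.2.2)⟩, (t.1.1.1.1, t.1.2.1)⟩)
    (fun t => ⟨⟨⟨(t.2.1, t.1.1.2.1 + t.1.2.1 + t.1.2.2 + t.2.2),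
        (t.1.1.2.1, t.1.2.1 + t.1.2.2 + t.2.2)⟩, (t.2.2, t.1.2.1 + t.1.2.2)⟩,
        (t.1.2.1, t.1.2.2)⟩) ?_ ?_ ?_ ?_ ?_ <;>
  · rintro ⟨⟨⟨⟨x1, x2⟩, ⟨y1, y2⟩⟩, ⟨z1, z2⟩⟩, ⟨w1, w2⟩⟩ h
    simp only [mem_sigma, HasAntidiagonal.mem_antidiagonal, Sigma.mk.inj_iff, Prod.mk.injEq,
      heq_eq_eq, and_true, true_and] at h ⊢
    try omega

end

section
variable (C : ℕ → A →ₗ[k] A →ₗ[k] A)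

lemma starMul_add_right (a b d : ℕ → A) :
    starMul C a (b + d) = starMul C a b + starMul C a d := by
  funext n
  simp only [starMul, Pi.add_apply, map_add, sum_add_distrib]

lemma starMul_apply_zero (hC0 : ∀ a b : A, C 0 a b = a * b) (a b : ℕ → A) :
    starMul C a b 0 = a 0 * b 0 := by
  simp [starMul, hC0]

lemma mul_eq_one_of_starMul_eq_starOne (hC0 : ∀ a b : A, C 0 a b = a * b) {a b : ℕ → A}
    (hab : starMul C a b = starOne) : a 0 * b 0 = 1 := by
  rw [← starMul_apply_zero C hC0, hab, starOne, if_pos rfl]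

lemma starMul_apply_of_forall_lt_eq_zero (hC0 : ∀ a b : A, C 0 a b = a * b) (a d : ℕ → A)
    {n : ℕ} (hd : ∀ m < n, d m = 0) : starMul C a d n = a 0 * d n := by
  have h0 : (0, n) ∈ antidiagonal n := by simp
  rw [starMul, sum_eq_single_of_mem _ h0, sum_eq_single_of_mem _ h0, hC0]
  · intro q hq hne
    rw [hd _ (snd_lt_of_mem_antidiagonal hq hne), map_zero]
  · intro p hp hne
    refine sum_eq_zero fun q hq => ?_
    have hq_le := HasAntidiagonal.antidiagonal.snd_le hq
    have hp_lt := snd_lt_of_mem_antidiagonal hp hne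
    rw [hd _ (by omega), map_zero]

lemma C_one_left (hC0 : ∀ a b : A, C 0 a b = a * b)
    (hunital : ∀ r : ℕ, 1 ≤ r → ∀ a : A, C r 1 a = 0 ∧ C r a 1 = 0) (i : ℕ) (x : A) :
    C i 1 x = if i = 0 then x else 0 := by
  split_ifs with hi
  · rw [hi, hC0, one_mul]
  · exact (hunital i (Nat.one_le_iff_ne_zero.2 hi) x).1

lemma C_one_right (hC0 : ∀ a b : A, C 0 a b = a * b)
    (hunital : ∀ r : ℕ, 1 ≤ r → ∀ a : A, C r 1 a = 0 ∧ C r a 1 = 0) (i : ℕ) (x : A) :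
    C i x 1 = if i = 0 then x else 0 := by
  split_ifs with hi
  · rw [hi, hC0, mul_one]
  · exact (hunital i (Nat.one_le_iff_ne_zero.2 hi) x).2

lemma C_starOne_left (hC0 : ∀ a b : A, C 0 a b = a * b)
    (hunital : ∀ r : ℕ, 1 ≤ r → ∀ a : A, C r 1 a = 0 ∧ C r a 1 = 0) (i j : ℕ) (x : A) :
    C i (starOne j) x = if j = 0 ∧ i = 0 then x else 0 := by
  unfold starOne
  split_ifs <;> simp_all [C_one_left C hC0 hunital]

lemma C_starOne_right (hC0 : ∀ a b : A, C 0 a b = a * b)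
    (hunital : ∀ r : ℕ, 1 ≤ r → ∀ a : A, C r 1 a = 0 ∧ C r a 1 = 0) (i j : ℕ) (x : A) :
    C i x (starOne j) = if j = 0 ∧ i = 0 then x else 0 := by
  unfold starOne
  split_ifs <;> simp_all [C_one_right C hC0 hunital]

lemma starOne_starMul (hC0 : ∀ a b : A, C 0 a b = a * b)
    (hunital : ∀ r : ℕ, 1 ≤ r → ∀ a : A, C r 1 a = 0 ∧ C r a 1 = 0) (a : ℕ → A) :
    starMul C starOne a = a := by
  funext n
  simp only [starMul, C_starOne_left C hC0 hunital, ite_and, sum_antidiagonal_ite_fst_eq_zero]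

lemma starMul_starOne (hC0 : ∀ a b : A, C 0 a b = a * b)
    (hunital : ∀ r : ℕ, 1 ≤ r → ∀ a : A, C r 1 a = 0 ∧ C r a 1 = 0) (a : ℕ → A) :
    starMul C a starOne = a := by
  funext n
  simp only [starMul, C_starOne_right C hC0 hunital, ite_and, sum_antidiagonal_ite_fst_eq_zero,
    sum_antidiagonal_ite_snd_eq_zero]

lemma starMul_assoc (hassoc : ∀ (n : ℕ) (a b c : A),
      ∑ p ∈ antidiagonal n, C p.1 (C p.2 a b) c = ∑ p ∈ antidiagonal n, C p.1 a (C p.2 b c))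
    (a b c : ℕ → A) :
    starMul C (starMul C a b) c = starMul C a (starMul C b c) := by
  funext n
  simp only [starMul, map_sum, LinearMap.sum_apply]
  refine (sum_antidiagonal_regroup_left n fun i j x y z => C i (C j (a x) (b y)) (c z)).trans
    (.trans ?_ (sum_antidiagonal_regroup_right n fun i j x y z => C i (a x) (C j (b y) (c z))).symm)
  simp only [hassoc]

lemma eq_of_starMul_eq_starOne (hC0 : ∀ a b : A, C 0 a b = a * b)
    (hassoc : ∀ (n : ℕ) (a b c : A),
      ∑ p ∈ antidiagonal n, C p.1 (C p.2 a b) c = ∑ p ∈ antidiagonal n, C p.1 a (C p.2 b c))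
    (hunital : ∀ r : ℕ, 1 ≤ r → ∀ a : A, C r 1 a = 0 ∧ C r a 1 = 0) {a b c : ℕ → A}
    (hab : starMul C a b = starOne) (hbc : starMul C b c = starOne) : a = c := by
  rw [← starMul_starOne C hC0 hunital a, ← hbc, ← starMul_assoc C hassoc, hab,
    starOne_starMul C hC0 hunital]

def starRightInv (v : A) (a : ℕ → A) : ℕ → A
  | n => v * (starOne n - starMul C a (fun m => if m < n then starRightInv v a m else 0) n)

lemma starRightInv_apply (v : A) (a : ℕ → A) (n : ℕ) :
    starRightInv C v a n =
      v * (starOne n - starMul C a (fun m => if m < n then starRightInv C v a m else 0) n) := by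
  rw [starRightInv]

lemma starMul_starRightInv (hC0 : ∀ a b : A, C 0 a b = a * b) (a : ℕ → A) (u : Aˣ)
    (ha : a 0 = u) : starMul C a (starRightInv C ↑u⁻¹ a) = starOne := by
  funext n
  set b := starRightInv C ↑u⁻¹ a
  set below : ℕ → A := fun m => if m < n then b m else 0
  set above : ℕ → A := fun m => if m < n then 0 else b m
  have hb : b = below + above := by
    funext m
    by_cases hm : m < n <;> simp [below, above, hm]
  have habove : starMul C a above n = a 0 * b n :=
    (starMul_apply_of_forall_lt_eq_zero C hC0 a above fun m hm => if_pos hm).trans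
      (by simp [above])
  calc starMul C a b n = starMul C a below n + u * b n := by
        rw [← ha, ← habove, ← Pi.add_apply, ← starMul_add_right, ← hb]
    _ = starOne n := by
        rw [show b n = _ from starRightInv_apply C _ a n, Units.mul_inv_cancel_left]
        abel

lemma exists_starMul_eq_starOne (hC0 : ∀ a b : A, C 0 a b = a * b) (a : ℕ → A)
    (ha : IsUnit (a 0)) : ∃ b, starMul C a b = starOne ∧ IsUnit (b 0) := by
  have hab := starMul_starRightInv C hC0 a ha.unit ha.unit_spec.symm
  refine ⟨_, hab, ha.unit⁻¹, Units.mul_eq_one_iff_inv_eq.1 ?_⟩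
  rw [ha.unit_spec]
  exact mul_eq_one_of_starMul_eq_starOne C hC0 hab

end

/-- For a unital formal associative deformation of a unital
`k`-algebra `A`, a formal series `a : ℕ → A` is `⋆`-invertible if and only if its
classical limit `a(0)` is invertible in `A`. -/
theorem star_invertible_iff_classical_limit_invertible
    (C : ℕ → A →ₗ[k] A →ₗ[k] A)
    (hC0 : ∀ a b : A, C 0 a b = a * b)
    (hassoc : ∀ (n : ℕ) (a b c : A),
      ∑ p ∈ antidiagonal n, C p.1 (C p.2 a b) c =
      ∑ p ∈ antidiagonal n, C p.1 a (C p.2 b c))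
    (hunital : ∀ r : ℕ, 1 ≤ r → ∀ a : A, C r 1 a = 0 ∧ C r a 1 = 0)
    (a : ℕ → A) :
    (∃ b : ℕ → A, starMul C a b = starOne ∧ starMul C b a = starOne) ↔ IsUnit (a 0) := by
  constructor
  · rintro ⟨b, hab, hba⟩
    exact isUnit_iff_exists.2 ⟨b 0, mul_eq_one_of_starMul_eq_starOne C hC0 hab,
      mul_eq_one_of_starMul_eq_starOne C hC0 hba⟩
  · intro ha
    obtain ⟨b, hab, hb⟩ := exists_starMul_eq_starOne C hC0 a ha
    obtain ⟨c, hbc, -⟩ := exists_starMul_eq_starOne C hC0 b hb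
    obtain rfl := eq_of_starMul_eq_starOne C hC0 hassoc hunital hab hbc
    exact ⟨b, hab, hbc⟩
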